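/- arXiv:2109.08573 — 2 statements merged into one kernel-verified Lean document; each statement's English description precedes it below -/
import Mathlib

section
/- Let ℳ be a finite set with at least two elements. For each M ∈ ℳ let Ẑ^M be a real-valued random variable on a common probability space, the family (Ẑ^M)_{M∈ℳ} being mutually independent, with E[Ẑ^M] = Z^M and Var(Ẑ^M) ≤ σ*² for a common finite constant σ*² > 0. Suppose M* ∈ ℳ is the unique maximiser of M ↦ Z^M, and set Δ = min_{L ≠ M*} (Z^{M*} − Z^L) > 0. Then the probability that Ẑ^{M*} > Ẑ^L simultaneously for every L ≠ M* is at least 1 − (|ℳ| − 1)·(1 + Δ²/(2σ*²))^{−1}. -/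
/-!
Each wrong model `L` beats `M*` only if `Ẑ^L - Ẑ^{M*}` exceeds its mean `Z^L - Z^{M*} ≤ -Δ` by at
least `Δ`. By independence this difference has variance at most `2σ*²`, so Cantelli's inequality
bounds that probability by `(1 + Δ²/(2σ*²))⁻¹`; a union bound over the `|ℳ| - 1` wrong models
finishes the proof.
-/

open MeasureTheory ProbabilityTheory

namespace ProbabilityTheory

variable {Ω : Type*} [MeasurableSpace Ω] {μ : Measure Ω} {X Y : Ω → ℝ}

lemma IndepFun.variance_sub (hX : MemLp X 2 μ) (hY : MemLp Y 2 μ) (h : X ⟂ᵢ[μ] Y) :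
    Var[X - Y; μ] = Var[X; μ] + Var[Y; μ] := by
  rw [sub_eq_add_neg, h.neg_right.variance_add hX hY.neg, variance_neg]

/-- **Cantelli's inequality** (one-sided Chebyshev). -/
theorem measureReal_ge_le_variance_div_add_sq [IsProbabilityMeasure μ] (hX : MemLp X 2 μ)
    {t : ℝ} (ht : 0 < t) :
    μ.real {ω | μ[X] + t ≤ X ω} ≤ Var[X; μ] / (Var[X; μ] + t ^ 2) := by
  set v := Var[X; μ]
  have hv : 0 ≤ v := variance_nonneg X μ
  -- Markov's inequality for `(X - μ[X] + u)²`, with the shift `u = v / t` that optimises it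
  set u := v / t
  set S : Ω → ℝ := fun ω ↦ X ω - μ[X] + u
  have hS : MemLp S 2 μ := (hX.sub (memLp_const _)).add (memLp_const u)
  have hS_mean : μ[S] = u := by
    have hXi := hX.integrable one_le_two
    simp only [S]
    rw [integral_add (by fun_prop) (integrable_const u), integral_sub hXi (integrable_const _)]
    simp
  have hS_var : Var[S; μ] = v :=
    (variance_add_const (hX.1.sub aestronglyMeasurable_const) u).trans
      (variance_sub_const hX.1 _)
  have hS_sq : μ[S ^ 2] = v + u ^ 2 := by
    rw [variance_eq_sub hS, hS_mean] at hS_var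
    linarith
  have hsub : {ω | μ[X] + t ≤ X ω} ⊆ {ω | (t + u) ^ 2 ≤ (S ^ 2) ω} := fun ω hω ↦ by
    have : t + u ≤ S ω := by simp only [Set.mem_ofPred_eq] at hω; simp only [S]; linarith
    exact pow_le_pow_left₀ (by positivity) this 2
  have hmarkov := mul_meas_ge_le_integral_of_nonneg (ae_of_all _ fun ω ↦ sq_nonneg (S ω))
    hS.integrable_sq ((t + u) ^ 2)
  have hu : (v + u ^ 2) / (t + u) ^ 2 = v / (v + t ^ 2) := by
    simp only [u]; field_simp; ring
  calc μ.real {ω | μ[X] + t ≤ X ω} ≤ μ.real {ω | (t + u) ^ 2 ≤ (S ^ 2) ω} :=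
        measureReal_mono hsub
    _ ≤ (v + u ^ 2) / (t + u) ^ 2 := by
        rw [le_div_iff₀ (by positivity), ← hS_sq, mul_comm]; exact hmarkov
    _ = v / (v + t ^ 2) := hu

theorem IndepFun.measureReal_le_le_inv_one_add_sq_div [IsProbabilityMeasure μ]
    (hX : MemLp X 2 μ) (hY : MemLp Y 2 μ) (h : X ⟂ᵢ[μ] Y) {s Δ : ℝ} (hs : 0 < s)
    (hvar : Var[X; μ] + Var[Y; μ] ≤ s) (hΔ : 0 < Δ) (hgap : Δ ≤ μ[Y] - μ[X]) :
    μ.real {ω | Y ω ≤ X ω} ≤ (1 + Δ ^ 2 / s)⁻¹ := by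
  set t := μ[Y] - μ[X]
  have hmean : μ[X - Y] = μ[X] - μ[Y] :=
    integral_sub (hX.integrable one_le_two) (hY.integrable one_le_two)
  have hevent : {ω | Y ω ≤ X ω} = {ω | μ[X - Y] + t ≤ (X - Y) ω} := by
    ext ω
    simp only [Set.mem_ofPred_eq, hmean]
    simp only [Pi.sub_apply, t]
    constructor <;> intro <;> linarith
  have ht : 0 < t := hΔ.trans_le hgap
  have hcantelli := measureReal_ge_le_variance_div_add_sq (hX.sub hY) ht
  rw [h.variance_sub hX hY, ← hevent] at hcantelli
  refine hcantelli.trans ?_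
  have hv : 0 ≤ Var[X; μ] + Var[Y; μ] := add_nonneg (variance_nonneg _ _) (variance_nonneg _ _)
  rw [inv_eq_one_div, one_add_div hs.ne', one_div_div,
    div_le_div_iff₀ (add_pos_of_nonneg_of_pos hv (pow_pos ht 2)) (by positivity)]
  nlinarith [pow_le_pow_left₀ hΔ.le hgap 2]

end ProbabilityTheory

namespace MeasureTheory

theorem one_sub_sum_measureReal_le_measureReal_biInter_compl {Ω ι : Type*} [MeasurableSpace Ω]
    {μ : Measure Ω} [IsProbabilityMeasure μ] (s : Finset ι) (t : ι → Set Ω) :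
    1 - ∑ i ∈ s, μ.real (t i) ≤ μ.real (⋂ i ∈ s, (t i)ᶜ) := by
  have hcover : Set.univ = (⋂ i ∈ s, (t i)ᶜ) ∪ ⋃ i ∈ s, t i := by
    rw [← Set.compl_iUnion₂, Set.compl_union_self]
  have := measureReal_union_le (μ := μ) (⋂ i ∈ s, (t i)ᶜ) (⋃ i ∈ s, t i)
  rw [← hcover, probReal_univ] at this
  linarith [measureReal_biUnion_finset_le (μ := μ) s t]

end MeasureTheory

theorem model_selection_probability_bound_general
    {Ω : Type*} [MeasurableSpace Ω] (μ : Measure Ω) [IsProbabilityMeasure μ]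
    {𝓜 : Type*} [Fintype 𝓜] [DecidableEq 𝓜]
    (Zhat : 𝓜 → Ω → ℝ)
    (hL2 : ∀ m, MemLp (Zhat m) 2 μ)
    (hindep : iIndepFun Zhat μ)
    (Z : 𝓜 → ℝ) (hZ : ∀ m, ∫ ω, Zhat m ω ∂μ = Z m)
    (σsq : ℝ) (hσsq : 0 < σsq)
    (hvar : ∀ m, variance (Zhat m) μ ≤ σsq)
    (Mstar : 𝓜)
    (hmax : ∀ L, L ≠ Mstar → Z L < Z Mstar)
    (hne : (Finset.univ.erase Mstar).Nonempty)
    (Δ : ℝ)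
    (hΔ : Δ = (Finset.univ.erase Mstar).inf' hne (fun L => Z Mstar - Z L)) :
    1 - ((Fintype.card 𝓜 : ℝ) - 1) * (1 + Δ ^ 2 / (2 * σsq))⁻¹ ≤
      (μ {ω | ∀ L, L ≠ Mstar → Zhat L ω < Zhat Mstar ω}).toReal := by
  have hΔ_pos : 0 < Δ :=
    hΔ ▸ (Finset.lt_inf'_iff _).2 fun L hL ↦ sub_pos.2 (hmax L (Finset.ne_of_mem_erase hL))
  have hpair : ∀ L ∈ Finset.univ.erase Mstar,
      μ.real {ω | Zhat Mstar ω ≤ Zhat L ω} ≤ (1 + Δ ^ 2 / (2 * σsq))⁻¹ := fun L hL ↦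
    (hindep.indepFun (Finset.ne_of_mem_erase hL)).measureReal_le_le_inv_one_add_sq_div (hL2 L)
      (hL2 Mstar) (by positivity) (by linarith [hvar L, hvar Mstar]) hΔ_pos
      (by rw [hZ, hZ]; exact hΔ ▸ Finset.inf'_le _ hL)
  have hcard : ((Finset.univ.erase Mstar).card : ℝ) = Fintype.card 𝓜 - 1 := by
    rw [Finset.card_erase_of_mem (Finset.mem_univ _), Finset.card_univ,
      Nat.cast_sub (Fintype.card_pos_iff.2 ⟨Mstar⟩), Nat.cast_one]
  have hevent : {ω | ∀ L, L ≠ Mstar → Zhat L ω < Zhat Mstar ω} =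
      ⋂ L ∈ Finset.univ.erase Mstar, {ω | Zhat Mstar ω ≤ Zhat L ω}ᶜ := by
    ext ω; simp
  calc 1 - ((Fintype.card 𝓜 : ℝ) - 1) * (1 + Δ ^ 2 / (2 * σsq))⁻¹
      ≤ 1 - ∑ L ∈ Finset.univ.erase Mstar, μ.real {ω | Zhat Mstar ω ≤ Zhat L ω} := by
        rw [← hcard, ← nsmul_eq_mul, ← Finset.sum_const]
        exact sub_le_sub_left (Finset.sum_le_sum hpair) 1
    _ ≤ μ.real {ω | ∀ L, L ≠ Mstar → Zhat L ω < Zhat Mstar ω} := by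
        rw [hevent]; exact one_sub_sum_measureReal_le_measureReal_biInter_compl _ _

/-- Probability of selecting the correct model by maximising independent unbiased
marginal-likelihood estimators, with a uniform variance bound `σsq`:
`P(Ẑ^{M*} > Ẑ^L for all L ≠ M*) ≥ 1 − (|ℳ| − 1)·(1 + Δ²/(2σ*²))⁻¹`. -/
theorem model_selection_probability_bound
    {Ω : Type*} [MeasurableSpace Ω] (μ : Measure Ω) [IsProbabilityMeasure μ]
    {𝓜 : Type*} [Fintype 𝓜] [DecidableEq 𝓜]
    (hcard : 2 ≤ Fintype.card 𝓜)
    (Zhat : 𝓜 → Ω → ℝ)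
    (hmeas : ∀ m, Measurable (Zhat m))
    (hL2 : ∀ m, MemLp (Zhat m) 2 μ)
    (hindep : iIndepFun Zhat μ)
    (Z : 𝓜 → ℝ) (hZ : ∀ m, ∫ ω, Zhat m ω ∂μ = Z m)
    (σsq : ℝ) (hσsq : 0 < σsq)
    (hvar : ∀ m, variance (Zhat m) μ ≤ σsq)
    (Mstar : 𝓜)
    (hmax : ∀ L, L ≠ Mstar → Z L < Z Mstar)
    (hne : (Finset.univ.erase Mstar).Nonempty)
    (Δ : ℝ)
    (hΔ : Δ = (Finset.univ.erase Mstar).inf' hne (fun L => Z Mstar - Z L)) :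
    1 - ((Fintype.card 𝓜 : ℝ) - 1) * (1 + Δ ^ 2 / (2 * σsq))⁻¹ ≤
      (μ {ω | ∀ L, L ≠ Mstar → Zhat L ω < Zhat Mstar ω}).toReal :=
  model_selection_probability_bound_general μ Zhat hL2 hindep Z hZ σsq hσsq hvar Mstar hmax hne Δ hΔ
end

section
/- Let V and ℳ be nonempty finite sets. For each v ∈ V and m ∈ ℳ, let g_v(·|m) be a measurable nonnegative function on ℝ with ∫_ℝ g_v(z|m) dz = 1, such that z ↦ z·g_v(z|m) is integrable with ∫_ℝ z·g_v(z|m) dz = Z_v(m) > 0. Let p : ℳ^V → [0,∞) with C = Σ_{M'∈ℳ^V} p(M')·∏_{v∈V} Z_v(M'_v) > 0 and μ(M) = p(M)·∏_{v∈V} Z_v(M_v)/C. Define the multiply-augmented target on ℳ^V × ℝ^{V×ℳ} by μ̄(M, z̄) = (p(M)/C)·∏_{v∈V} [ z̄(v, M_v)·∏_{m'∈ℳ} g_v(z̄(v, m') | m') ]. Then for every M ∈ ℳ^V, ∫_{ℝ^{V×ℳ}} μ̄(M, z̄) dz̄ = μ(M), where the integral is with respect to the product Lebesgue measure on ℝ^{V×ℳ}.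 -/
/-!
Attaching the factor `z̄(v, M_v)` to exactly one coordinate per node makes the augmented density a
product of one-dimensional functions of the separate coordinates `z̄(v, m')`. By Fubini its
integral is the product of the one-dimensional integrals: the tilted factor `z · g_v(z | M_v)`
integrates to `Z_v(M_v)` by unbiasedness, and every other factor `g_v(· | m')` to `1`.
-/

open MeasureTheory

section Augmentation

variable {V 𝓜 : Type*} [Fintype V] [Fintype 𝓜] [DecidableEq 𝓜]

lemma prod_augmented_eq_prod_coord (g : V → 𝓜 → ℝ → ℝ) (M : V → 𝓜) (zbar : V × 𝓜 → ℝ) :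
    ∏ v, (zbar (v, M v) * ∏ m', g v m' (zbar (v, m'))) =
      ∏ vm : V × 𝓜, (if vm.2 = M vm.1 then zbar vm else 1) * g vm.1 vm.2 (zbar vm) := by
  rw [Fintype.prod_prod_type]
  refine Finset.prod_congr rfl fun v _ => ?_
  rw [Finset.prod_mul_distrib, Finset.prod_ite_eq' Finset.univ (M v) fun m' => zbar (v, m')]
  simp

lemma integral_prod_augmented (g : V → 𝓜 → ℝ → ℝ) (M : V → 𝓜) :
    ∫ zbar : V × 𝓜 → ℝ, ∏ v, (zbar (v, M v) * ∏ m', g v m' (zbar (v, m')))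
        ∂(Measure.pi fun _ : V × 𝓜 => volume) =
      ∏ v, ∏ m', ∫ z, (if m' = M v then z else 1) * g v m' z := by
  simp_rw [prod_augmented_eq_prod_coord]
  exact (integral_fintype_prod_eq_prod (μ := fun _ => volume) fun vm z =>
    (if vm.2 = M vm.1 then z else 1) * g vm.1 vm.2 z).trans (Fintype.prod_prod_type _)

end Augmentation

theorem multiply_augmented_target_marginal_general
    {V 𝓜 : Type*} [Fintype V]
    [Fintype 𝓜]
    (g : V → 𝓜 → ℝ → ℝ)
    (hgprob : ∀ v m, ∫ z, g v m z = 1)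
    (Z : V → 𝓜 → ℝ)
    (hunbiased : ∀ v m, ∫ z, z * g v m z = Z v m)
    (p : (V → 𝓜) → ℝ)
    (C : ℝ)
    (Mconf : V → 𝓜) :
    ∫ zbar : V × 𝓜 → ℝ,
        (p Mconf / C) *
          ∏ v, (zbar (v, Mconf v) * ∏ m' : 𝓜, g v m' (zbar (v, m')))
        ∂(Measure.pi fun _ : V × 𝓜 => volume) =
      p Mconf * (∏ v, Z v (Mconf v)) / C := by
  classical
  have hfactor : ∀ v, ∏ m', ∫ z, (if m' = Mconf v then z else 1) * g v m' z = Z v (Mconf v) := by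
    intro v
    rw [Finset.prod_eq_single (Mconf v) (fun m' _ hm' => by simp [hm', hgprob]) (by simp)]
    simp [hunbiased]
  rw [integral_const_mul, integral_prod_augmented, Finset.prod_congr rfl fun v _ => hfactor v]
  ring

/-- Integrating out all augmenting estimator values from the multiply-augmented target
`μ̄(M, z̄) = (p(M)/C)·∏_v [ z̄(v, M_v)·∏_{m'} g_v(z̄(v, m') | m') ]` recovers the model
posterior `μ(M) = p(M)·∏_v Z_v(M_v)/C`. -/
theorem multiply_augmented_target_marginal
    {V 𝓜 : Type*} [Fintype V] [DecidableEq V] [Nonempty V]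
    [Fintype 𝓜] [DecidableEq 𝓜] [Nonempty 𝓜]
    (g : V → 𝓜 → ℝ → ℝ)
    (hgmeas : ∀ v m, Measurable (g v m))
    (hgnonneg : ∀ v m z, 0 ≤ g v m z)
    (hgprob : ∀ v m, ∫ z, g v m z = 1)
    (Z : V → 𝓜 → ℝ)
    (hZpos : ∀ v m, 0 < Z v m)
    (hint : ∀ v m, Integrable (fun z => z * g v m z))
    (hunbiased : ∀ v m, ∫ z, z * g v m z = Z v m)
    (p : (V → 𝓜) → ℝ) (hp : ∀ c, 0 ≤ p c)
    (C : ℝ)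
    (hC : C = ∑ c : V → 𝓜, p c * ∏ v, Z v (c v))
    (hCpos : 0 < C)
    (Mconf : V → 𝓜) :
    ∫ zbar : V × 𝓜 → ℝ,
        (p Mconf / C) *
          ∏ v, (zbar (v, Mconf v) * ∏ m' : 𝓜, g v m' (zbar (v, m')))
        ∂(Measure.pi fun _ : V × 𝓜 => volume) =
      p Mconf * (∏ v, Z v (Mconf v)) / C :=
  multiply_augmented_target_marginal_general g hgprob Z hunbiased p C Mconf
end
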